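/- (Upper bound on the subtractive SEE objective, inequality (B.8), full form.) Let I and n be positive natural numbers. For each i : Fin I let C i, F i, G i : Matrix (Fin n) (Fin n) ℂ be positive semidefinite, let e, b, Pp, Ps, Pz : Fin I → ℝ be nonnegative, let σ2 > 0, η ≥ 0, Pb ≥ 0, P_CBS ≥ 0, and assume ∑ i, (Ps i + Pz i) ≤ P_CBS. For each i set A i := Pp i • C i + Pz i • G i + σ2 • 1 and B i := A i + Ps i • F i, and set f₁ i := Real.logb 2 (b i * Pp i + e i * Ps i + σ2) + Real.logb 2 ((A i).det.re) and f₂ i := Real.logb 2 (b i * Pp i + σ2) + Real.logb 2 ((B i).det.re). Then ∑ i, (f₁ i - f₂ i) - η * (∑ i, (Ps i + Pz i) + Pb) ≤ (max over i of e i) * P_CBS / (σ2 * Real.log 2). -/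

import Mathlib

/-!
On each subcarrier the rate term `log (b Pp + e Ps + σ²) - log (b Pp + σ²)` is at most
`e Ps / σ²` by `log y ≤ y - 1`, and the eavesdropper term `log det A - log det (A + Ps F)` is
nonpositive because adding a positive semidefinite matrix to a positive definite one does not
decrease the determinant. Summing, bounding each `e i` by the maximum and `∑ Ps` by the budget,
and dropping the nonnegative power cost gives the bound.
-/

open scoped ComplexOrder
open Real

namespace Matrix
variable {n 𝕜 : Type*} [Fintype n] [DecidableEq n] [RCLike 𝕜]

theorem PosSemidef.one_le_eigenvalues_one_add {M : Matrix n n 𝕜} (hM : M.PosSemidef) (i : n) :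
    1 ≤ (isHermitian_one.add hM.isHermitian).eigenvalues i := by
  set v := (isHermitian_one.add hM.isHermitian).eigenvectorBasis i
  have hv : RCLike.re (star ⇑v ⬝ᵥ ⇑v) = 1 := by
    rw [dotProduct_comm, ← EuclideanSpace.inner_eq_star_dotProduct, inner_self_eq_norm_sq,
      (isHermitian_one.add hM.isHermitian).eigenvectorBasis.orthonormal.1 i, one_pow]
  rw [IsHermitian.eigenvalues_eq, add_mulVec, one_mulVec, dotProduct_add, map_add, hv]
  exact le_add_of_nonneg_right (hM.re_dotProduct_nonneg v)

theorem PosSemidef.one_le_det_one_add {M : Matrix n n 𝕜} (hM : M.PosSemidef) :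
    1 ≤ (1 + M).det := by
  rw [(isHermitian_one.add hM.isHermitian).det_eq_prod_eigenvalues, ← RCLike.ofReal_prod]
  exact_mod_cast Finset.one_le_prod fun i _ => hM.one_le_eigenvalues_one_add i

-- `A + S = √A (1 + √A⁻¹ S √A⁻¹) √A`, and `det (1 + M) ≥ 1` for `M ≥ 0`.
open scoped MatrixOrder in
theorem PosDef.det_le_det_add {A S : Matrix n n 𝕜} (hA : A.PosDef) (hS : S.PosSemidef) :
    A.det ≤ (A + S).det := by
  set R := CFC.sqrt A
  have hR : R.PosSemidef := nonneg_iff_posSemidef.mp (CFC.sqrt_nonneg A)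
  have hRR : R * R = A := CFC.sqrt_mul_sqrt_self A hA.posSemidef.nonneg
  have hRunit : IsUnit R.det := by
    have := hA.det_pos.ne'
    rw [← hRR, det_mul] at this
    exact isUnit_iff_ne_zero.mpr (left_ne_zero_of_mul this)
  have hM : (R⁻¹ * S * R⁻¹).PosSemidef := by
    simpa [conjTranspose_nonsing_inv, hR.isHermitian.eq] using hS.conjTranspose_mul_mul_same R⁻¹
  have hAS : A + S = R * (1 + R⁻¹ * S * R⁻¹) * R := by
    rw [Matrix.mul_add, Matrix.add_mul, Matrix.mul_one, hRR, Matrix.mul_assoc, Matrix.mul_assoc,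
      nonsing_inv_mul R hRunit, Matrix.mul_one, ← Matrix.mul_assoc, mul_nonsing_inv R hRunit,
      Matrix.one_mul]
  calc A.det = A.det * 1 := (mul_one _).symm
    _ ≤ A.det * (1 + R⁻¹ * S * R⁻¹).det :=
      mul_le_mul_of_nonneg_left hM.one_le_det_one_add hA.det_pos.le
    _ = (A + S).det := by rw [hAS, det_mul, det_mul, ← hRR, det_mul]; ring

end Matrix

theorem Real.log_add_sub_log_le {x t : ℝ} (hx : 0 < x) (hxt : 0 < x + t) :
    log (x + t) - log x ≤ t / x := by
  rw [← log_div hxt.ne' hx.ne']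
  calc log ((x + t) / x) ≤ (x + t) / x - 1 := log_le_sub_one_of_pos (div_pos hxt hx)
    _ = t / x := by field_simp; ring

theorem Real.logb_add_sub_logb_le {b x t : ℝ} (hb : 1 < b) (hx : 0 < x) (hxt : 0 < x + t) :
    logb b (x + t) - logb b x ≤ t / (x * log b) := by
  rw [logb, logb, div_sub_div_same, ← div_div]
  exact div_le_div_of_nonneg_right (log_add_sub_log_le hx hxt) (log_nonneg hb.le)

theorem Finset.sum_mul_le_sup'_mul_sum {ι R : Type*}
    [Semiring R] [LinearOrder R] [IsOrderedRing R]
    {s : Finset ι} (hs : s.Nonempty) {f g : ι → R} (hg : ∀ i ∈ s, 0 ≤ g i) :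
    ∑ i ∈ s, f i * g i ≤ s.sup' hs f * ∑ i ∈ s, g i := by
  rw [Finset.mul_sum]
  exact Finset.sum_le_sum fun i hi => mul_le_mul_of_nonneg_right (le_sup' f hi) (hg i hi)

theorem secrecy_rate_le {n : Type*} [Fintype n] [DecidableEq n] {A S : Matrix n n ℂ}
    (hA : A.PosDef) (hS : S.PosSemidef) {σ x t : ℝ} (hσ : 0 < σ) (hσx : σ ≤ x) (ht : 0 ≤ t) :
    logb 2 (x + t) + logb 2 A.det.re - (logb 2 x + logb 2 (A + S).det.re) ≤ t / (σ * log 2) := by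
  have hdet : logb 2 A.det.re ≤ logb 2 (A + S).det.re :=
    logb_le_logb_of_le one_lt_two (Complex.pos_iff.mp hA.det_pos).1
      (Complex.le_def.mp (hA.det_le_det_add hS)).1
  have hsnr : logb 2 (x + t) - logb 2 x ≤ t / (x * log 2) :=
    logb_add_sub_logb_le one_lt_two (hσ.trans_le hσx) (by linarith)
  have hσ_div : t / (x * log 2) ≤ t / (σ * log 2) := by gcongr
  linarith

theorem see_objective_upper_bound_general (I : ℕ) (hI : 0 < I) (n : ℕ)
    (C F G : Fin I → Matrix (Fin n) (Fin n) ℂ)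
    (hC : ∀ i, (C i).PosSemidef) (hF : ∀ i, (F i).PosSemidef) (hG : ∀ i, (G i).PosSemidef)
    (e b Pp Ps Pz : Fin I → ℝ)
    (he : ∀ i, 0 ≤ e i) (hb : ∀ i, 0 ≤ b i) (hPp : ∀ i, 0 ≤ Pp i)
    (hPs : ∀ i, 0 ≤ Ps i) (hPz : ∀ i, 0 ≤ Pz i)
    (σ2 : ℝ) (hσ2 : 0 < σ2) (η : ℝ) (hη : 0 ≤ η) (Pb : ℝ) (hPb : 0 ≤ Pb)
    (P_CBS : ℝ) (hsum : ∑ i, (Ps i + Pz i) ≤ P_CBS)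
    (A B : Fin I → Matrix (Fin n) (Fin n) ℂ)
    (hA : ∀ i, A i = Pp i • C i + Pz i • G i + σ2 • (1 : Matrix (Fin n) (Fin n) ℂ))
    (hB : ∀ i, B i = A i + Ps i • F i)
    (f₁ f₂ : Fin I → ℝ)
    (hf₁ : ∀ i, f₁ i = Real.logb 2 (b i * Pp i + e i * Ps i + σ2)
        + Real.logb 2 (((A i).det).re))
    (hf₂ : ∀ i, f₂ i = Real.logb 2 (b i * Pp i + σ2)
        + Real.logb 2 (((B i).det).re)) :
    ∑ i, (f₁ i - f₂ i) - η * (∑ i, (Ps i + Pz i) + Pb) ≤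
      (Finset.univ.sup' (Finset.univ_nonempty_iff.mpr ⟨⟨0, hI⟩⟩) e) * P_CBS /
        (σ2 * Real.log 2) := by
  set m := Finset.univ.sup' (Finset.univ_nonempty_iff.mpr ⟨⟨0, hI⟩⟩) e
  have hA_posDef i : (A i).PosDef := hA i ▸
    .posSemidef_add (((hC i).smul (hPp i)).add ((hG i).smul (hPz i))) (.smul .one hσ2)
  have hrate i : f₁ i - f₂ i ≤ e i * Ps i / (σ2 * log 2) := by
    rw [hf₁, hf₂, hB, add_right_comm (b i * Pp i)]
    exact secrecy_rate_le (hA_posDef i) ((hF i).smul (hPs i)) hσ2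
      (le_add_of_nonneg_left (mul_nonneg (hb i) (hPp i))) (mul_nonneg (he i) (hPs i))
  have hcost : 0 ≤ η * (∑ i, (Ps i + Pz i) + Pb) :=
    mul_nonneg hη (add_nonneg (Finset.sum_nonneg fun i _ => add_nonneg (hPs i) (hPz i)) hPb)
  have hPs_sum : ∑ i, Ps i ≤ P_CBS :=
    (Finset.sum_le_sum fun i _ => le_add_of_nonneg_right (hPz i)).trans hsum
  have hm : 0 ≤ m := (he ⟨0, hI⟩).trans (Finset.le_sup' e (Finset.mem_univ _))
  calc ∑ i, (f₁ i - f₂ i) - η * (∑ i, (Ps i + Pz i) + Pb)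
      ≤ ∑ i, e i * Ps i / (σ2 * log 2) := by
        linarith [Finset.sum_le_sum fun i (_ : i ∈ Finset.univ) => hrate i]
    _ = (∑ i, e i * Ps i) / (σ2 * log 2) := (Finset.sum_div ..).symm
    _ ≤ m * P_CBS / (σ2 * log 2) := by
      gcongr
      calc ∑ i, e i * Ps i ≤ m * ∑ i, Ps i :=
            Finset.sum_mul_le_sup'_mul_sum _ fun i _ => hPs i
        _ ≤ m * P_CBS := mul_le_mul_of_nonneg_left hPs_sum hm

/-- Upper bound on the subtractive SEE objective (inequality (B.8), full form). -/
theorem see_objective_upper_bound (I : ℕ) (hI : 0 < I) (n : ℕ) (hn : 0 < n)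
    (C F G : Fin I → Matrix (Fin n) (Fin n) ℂ)
    (hC : ∀ i, (C i).PosSemidef) (hF : ∀ i, (F i).PosSemidef) (hG : ∀ i, (G i).PosSemidef)
    (e b Pp Ps Pz : Fin I → ℝ)
    (he : ∀ i, 0 ≤ e i) (hb : ∀ i, 0 ≤ b i) (hPp : ∀ i, 0 ≤ Pp i)
    (hPs : ∀ i, 0 ≤ Ps i) (hPz : ∀ i, 0 ≤ Pz i)
    (σ2 : ℝ) (hσ2 : 0 < σ2) (η : ℝ) (hη : 0 ≤ η) (Pb : ℝ) (hPb : 0 ≤ Pb)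
    (P_CBS : ℝ) (hP : 0 ≤ P_CBS) (hsum : ∑ i, (Ps i + Pz i) ≤ P_CBS)
    (A B : Fin I → Matrix (Fin n) (Fin n) ℂ)
    (hA : ∀ i, A i = Pp i • C i + Pz i • G i + σ2 • (1 : Matrix (Fin n) (Fin n) ℂ))
    (hB : ∀ i, B i = A i + Ps i • F i)
    (f₁ f₂ : Fin I → ℝ)
    (hf₁ : ∀ i, f₁ i = Real.logb 2 (b i * Pp i + e i * Ps i + σ2)
        + Real.logb 2 (((A i).det).re))
    (hf₂ : ∀ i, f₂ i = Real.logb 2 (b i * Pp i + σ2)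
        + Real.logb 2 (((B i).det).re)) :
    ∑ i, (f₁ i - f₂ i) - η * (∑ i, (Ps i + Pz i) + Pb) ≤
      (Finset.univ.sup' (Finset.univ_nonempty_iff.mpr ⟨⟨0, hI⟩⟩) e) * P_CBS /
        (σ2 * Real.log 2) :=
  see_objective_upper_bound_general I hI n C F G hC hF hG e b Pp Ps Pz he hb hPp hPs hPz σ2 hσ2 η hη
    Pb hPb P_CBS hsum A B hA hB f₁ f₂ hf₁ hf₂
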